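/- For natural numbers n ≥ 2, summing over all k ≥ 2 the polynomials g_{n,k}(q) := q^{k(k−2)}·(1+q^n)/[n+1]_q · qbinom(n+1,k) · qbinom(n−2,k−2) gives MacMahon's q-Catalan number Cat_q(n) := qbinom(2n,n)/[n+1]_q. -/

import Mathlib

open Finset

/-- The q-analog `[m]_q = 1 + q + ⋯ + q^(m-1)`. -/
noncomputable def qint (q : RatFunc ℚ) (m : ℕ) : RatFunc ℚ := ∑ i ∈ Finset.range m, q ^ i

/-- The q-factorial `[m]_q!`. -/
noncomputable def qfact (q : RatFunc ℚ) (m : ℕ) : RatFunc ℚ := ∏ i ∈ Finset.range m, qint q (i + 1)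

/-- The q-binomial coefficient, vanishing outside `0 ≤ k ≤ n`. -/
noncomputable def qbinom (q : RatFunc ℚ) (n k : ℕ) : RatFunc ℚ :=
  if k ≤ n then qfact q n / (qfact q k * qfact q (n - k)) else 0

/-- MacMahon's q-Catalan number `Cat_q(n) = qbinom(2n,n)/[n+1]_q`. -/
noncomputable def qCatalan (q : RatFunc ℚ) (n : ℕ) : RatFunc ℚ :=
  qbinom q (2 * n) n / qint q (n + 1)

local notation "q" => (RatFunc.X : RatFunc ℚ)

private lemma qint_ne_zero (m : ℕ) (hm : 0 < m) : qint q m ≠ 0 := by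
  have he : qint q m = algebraMap (Polynomial ℚ) (RatFunc ℚ) (∑ i ∈ range m, Polynomial.X ^ i) := by
    rw [qint, map_sum]
    simp [RatFunc.algebraMap_X]
  rw [he]
  apply RatFunc.algebraMap_ne_zero
  intro h
  have := congrArg (Polynomial.eval (1:ℚ)) h
  simp [Polynomial.eval_finset_sum] at this
  omega

private lemma qfact_ne_zero (m : ℕ) : qfact q m ≠ 0 := by
  rw [qfact]
  exact Finset.prod_ne_zero_iff.2 fun i _ => qint_ne_zero (i+1) (Nat.succ_pos i)

private lemma qfact_succ (m : ℕ) : qfact q (m+1) = qfact q m * qint q (m+1) :=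
  Finset.prod_range_succ _ _

private lemma qint_add (a b : ℕ) : qint q (a+b) = qint q a + q ^ a * qint q b := by
  rw [qint, qint, qint, Finset.sum_range_add, Finset.mul_sum]
  simp [pow_add]

private lemma qbinom_eq {n k : ℕ} (h : k ≤ n) :
    qbinom q n k = qfact q n / (qfact q k * qfact q (n-k)) := if_pos h

private lemma qbinom_of_lt {n k : ℕ} (h : n < k) : qbinom q n k = 0 := if_neg (by omega)

private lemma qfact_zero : qfact q 0 = 1 := rfl

private lemma qbinom_zero (n : ℕ) : qbinom q n 0 = 1 := by
  rw [qbinom_eq (Nat.zero_le n), qfact_zero, one_mul, Nat.sub_zero,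
    div_self (qfact_ne_zero n)]

private lemma qbinom_symm {n k : ℕ} (h : k ≤ n) : qbinom q n (n-k) = qbinom q n k := by
  rw [qbinom_eq (Nat.sub_le n k), qbinom_eq h, Nat.sub_sub_self h, mul_comm]

private lemma qbinom_pascal (n k : ℕ) :
    qbinom q (n+1) (k+1) = qbinom q n (k+1) + q ^ (n-k) * qbinom q n k := by
  rcases lt_trichotomy n k with h | rfl | h
  · rw [qbinom_of_lt (by omega), qbinom_of_lt (by omega), qbinom_of_lt h]
    ring
  · rw [qbinom_eq (le_refl (n+1)), qbinom_of_lt (by omega : n < n+1), Nat.sub_self, qfact_zero,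
      Nat.sub_self, pow_zero, qbinom_eq (le_refl n), Nat.sub_self, qfact_zero]
    rw [mul_one, mul_one, div_self (qfact_ne_zero n), div_self (qfact_ne_zero (n+1))]
    ring
  · have hk1 : k + 1 ≤ n := h
    rw [qbinom_eq (by omega : k+1 ≤ n+1), qbinom_eq hk1, qbinom_eq (by omega : k ≤ n)]
    have e1 : n + 1 - (k+1) = n - k := by omega
    have e2 : n - k = (n - (k+1)) + 1 := by omega
    rw [e1, e2, qfact_succ (n - (k+1)), qfact_succ n, qfact_succ k]
    have hint : qint q (n+1) = qint q (n - (k+1) + 1) + q ^ (n - (k+1) + 1) * qint q (k+1) := by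
      rw [← qint_add]
      congr 1
      omega
    rw [hint, ← e2]
    have f1 := qfact_ne_zero n
    have f2 := qfact_ne_zero k
    have f3 := qfact_ne_zero (k+1)
    have f4 := qfact_ne_zero (n - (k+1))
    have i1 := qint_ne_zero (k+1) (by omega)
    have i2 := qint_ne_zero (n - (k+1) + 1) (by omega)
    rw [e2]
    field_simp

private lemma qvdm (m p : ℕ) : ∀ r : ℕ, r ≤ m →
    qbinom q (m+p) r
      = ∑ j ∈ range (r+1), q ^ (j * (m - r + j)) * qbinom q m (r - j) * qbinom q p j := by
  induction p with
  | zero =>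
    intro r hr
    rw [Finset.sum_eq_single 0]
    · simp [qbinom_zero]
    · intro j _ hj
      rw [qbinom_of_lt (by omega : 0 < j)]
      ring
    · simp
  | succ p ih =>
    intro r hr
    rcases r with _ | r
    · simp [qbinom_zero]
    have hsplit : ∀ j ∈ range (r+2),
        q ^ (j * (m - (r+1) + j)) * qbinom q m (r+1-j) * qbinom q (p+1) j
          = q ^ (j * (m - (r+1) + j)) * qbinom q m (r+1-j) * qbinom q p j
            + (if hj : j = 0 then 0 else
                q ^ ((j-1) * (m - r + (j-1)) + (m + p - r)) * qbinom q m (r - (j-1)) * qbinom q p (j-1)) := by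
      intro j _
      rcases j with _ | j
      · simp [qbinom_zero]
      · simp only [Nat.add_sub_cancel, dif_neg (Nat.succ_ne_zero j)]
        rw [qbinom_pascal p j]
        rcases le_or_gt j p with hjp | hjp
        · have he : (j+1) * (m - (r+1) + (j+1)) + (p - j) = j * (m - r + j) + (m + p - r) := by
            have e1 : m - (r+1) + (j+1) = m - r + j := by omega
            rw [e1]
            have e2 : (j+1) * (m - r + j) = j * (m - r + j) + (m - r + j) := by ring
            omega
          have e3 : r + 1 - (j+1) = r - j := by omega
          rw [e3, ← he, pow_add]
          ring
        · rw [qbinom_of_lt hjp, qbinom_of_lt (by omega : p < j+1)]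
          ring
    rw [Finset.sum_congr rfl hsplit, Finset.sum_add_distrib]
    rw [Finset.sum_range_succ' (fun j => if hj : j = 0 then (0:RatFunc ℚ) else
        q ^ ((j-1) * (m - r + (j-1)) + (m + p - r)) * qbinom q m (r - (j-1)) * qbinom q p (j-1))]
    simp only [dif_neg (Nat.succ_ne_zero _), dif_pos rfl, Nat.add_sub_cancel, add_zero]
    have hA : (∑ j ∈ range (r+2), q ^ (j * (m - (r+1) + j)) * qbinom q m (r+1-j) * qbinom q p j)
        = qbinom q (m+p) (r+1) := (ih (r+1) hr).symm
    have hB : (∑ j ∈ range (r+1), q ^ (j * (m - r + j) + (m + p - r)) * qbinom q m (r - j) * qbinom q p j)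
        = q ^ (m + p - r) * qbinom q (m+p) r := by
      rw [ih r (by omega), Finset.mul_sum]
      apply Finset.sum_congr rfl
      intro j _
      rw [pow_add]
      ring
    rw [hA, hB]
    norm_num
    rw [show m + (p+1) = (m+p) + 1 from by omega, qbinom_pascal (m+p) r]

/-- For `n ≥ 2`, summing over all `k ≥ 2` the polynomials
`g_{n,k}(q) = q^(k(k-2)) (1+q^n)/[n+1]_q · qbinom(n+1,k) · qbinom(n-2,k-2)`
gives MacMahon's q-Catalan number `Cat_q(n)`.  (The terms with `k > n` all vanish.) -/
theorem sum_g_eq_qCatalan (n : ℕ) (hn : 2 ≤ n) :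
    ∑ k ∈ Finset.Icc 2 n,
        RatFunc.X ^ (k * (k - 2)) * (1 + RatFunc.X ^ n) / qint RatFunc.X (n + 1)
          * qbinom RatFunc.X (n + 1) k * qbinom RatFunc.X (n - 2) (k - 2)
    = qCatalan RatFunc.X n := by
  have hd : qint (RatFunc.X : RatFunc ℚ) (n+1) ≠ 0 := qint_ne_zero (n+1) (by omega)
  have hS1 : (∑ i ∈ range (n+1),
        q ^ (i * (i + 2)) * qbinom q (n+1) (i+2) * qbinom q (n-2) i)
      = qbinom q (2*n-1) (n-1) := by
    rw [Finset.sum_range_succ, qbinom_of_lt (by omega : n - 2 < n), mul_zero, add_zero]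
    have h := qvdm (n+1) (n-2) (n-1) (by omega)
    rw [show n + 1 + (n - 2) = 2*n - 1 from by omega,
      show n - 1 + 1 = n from by omega] at h
    rw [h]
    apply Finset.sum_congr rfl
    intro j hj
    simp only [Finset.mem_range] at hj
    have e1 : n + 1 - (n-1) + j = j + 2 := by omega
    have e2 : n - 1 - j = n + 1 - (j+2) := by omega
    rw [e1, e2, qbinom_symm (by omega : j + 2 ≤ n + 1)]
  have hS2 : (∑ i ∈ range (n+1),
        q ^ (i * (i + 1)) * qbinom q (n+1) (i+1) * qbinom q (n-2) i)
      = qbinom q (2*n-1) n := by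
    have h := qvdm (n+1) (n-2) n (by omega)
    rw [show n + 1 + (n - 2) = 2*n - 1 from by omega] at h
    rw [h]
    apply Finset.sum_congr rfl
    intro j hj
    simp only [Finset.mem_range] at hj
    have e1 : n + 1 - n + j = j + 1 := by omega
    have e2 : n - j = n + 1 - (j+1) := by omega
    rw [e1, e2, qbinom_symm (by omega : j + 1 ≤ n + 1)]
  have hmain : qbinom q (2*n) n
      = ∑ i ∈ range (n+1),
          (1 + q ^ n) * (q ^ (i * (i + 2)) * qbinom q (n+1) (i+2) * qbinom q (n-2) i) := by
    have h := qvdm (n+2) (n-2) n (by omega)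
    rw [show n + 2 + (n - 2) = 2*n from by omega] at h
    have h2 : qbinom q (2*n) n = ∑ i ∈ range (n+1),
        q ^ (i * (i + 2)) * qbinom q (n+2) (i+2) * qbinom q (n-2) i := by
      rw [h]
      apply Finset.sum_congr rfl
      intro j hj
      simp only [Finset.mem_range] at hj
      have e1 : n + 2 - n + j = j + 2 := by omega
      have e2 : n - j = n + 2 - (j+2) := by omega
      rw [e1, e2, qbinom_symm (by omega : j + 2 ≤ n + 2)]
    rw [h2]
    have h3 : ∀ i ∈ range (n+1),
        q ^ (i * (i + 2)) * qbinom q (n+2) (i+2) * qbinom q (n-2) i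
          = q ^ (i * (i + 2)) * qbinom q (n+1) (i+2) * qbinom q (n-2) i
            + q ^ n * (q ^ (i * (i + 1)) * qbinom q (n+1) (i+1) * qbinom q (n-2) i) := by
      intro i hi
      simp only [Finset.mem_range] at hi
      rw [show n + 2 = (n+1) + 1 from rfl, qbinom_pascal (n+1) (i+1)]
      have e : i * (i + 2) + (n + 1 - (i+1)) = n + i * (i+1) := by
        have : i * (i+2) = i * (i+1) + i := by ring
        omega
      calc q ^ (i * (i + 2)) * (qbinom q (n+1) (i+2) + q ^ (n+1-(i+1)) * qbinom q (n+1) (i+1))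
            * qbinom q (n-2) i
          = q ^ (i * (i + 2)) * qbinom q (n+1) (i+2) * qbinom q (n-2) i
            + q ^ (i * (i+2) + (n+1-(i+1))) * qbinom q (n+1) (i+1) * qbinom q (n-2) i := by
            rw [pow_add]; ring
        _ = _ := by rw [e, pow_add]; ring
    rw [Finset.sum_congr rfl h3, Finset.sum_add_distrib, ← Finset.mul_sum, hS2]
    have hsym : qbinom q (2*n-1) n = qbinom q (2*n-1) (n-1) := by
      rw [show n - 1 = (2*n-1) - n from by omega, qbinom_symm (by omega : n ≤ 2*n-1)]
    rw [hsym, ← hS1, Finset.mul_sum, ← Finset.sum_add_distrib]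
    apply Finset.sum_congr rfl
    intro i _
    ring
  have hre : (∑ k ∈ Finset.Icc 2 n,
        q ^ (k * (k - 2)) * (1 + q ^ n) / qint q (n + 1)
          * qbinom q (n + 1) k * qbinom q (n - 2) (k - 2))
      = (∑ i ∈ range (n+1),
          (1 + q ^ n) * (q ^ (i * (i + 2)) * qbinom q (n+1) (i+2) * qbinom q (n-2) i))
        / qint q (n+1) := by
    have hdrop : (∑ i ∈ range (n+1),
          (1 + q ^ n) * (q ^ (i * (i + 2)) * qbinom q (n+1) (i+2) * qbinom q (n-2) i))
        = ∑ i ∈ range (n-1),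
          (1 + q ^ n) * (q ^ (i * (i + 2)) * qbinom q (n+1) (i+2) * qbinom q (n-2) i) := by
      symm
      apply Finset.sum_subset
      · apply Finset.range_subset_range.2; omega
      · intro i hi hni
        simp only [Finset.mem_range] at hi hni
        rw [qbinom_of_lt (by omega : n - 2 < i)]
        ring
    rw [hdrop, Finset.sum_div]
    refine Finset.sum_nbij' (fun k => k - 2) (fun i => i + 2) ?_ ?_ ?_ ?_ ?_
    · intro k hk
      simp only [Finset.mem_Icc] at hk
      simp only [Finset.mem_range]
      omega
    · intro i hi
      simp only [Finset.mem_range] at hi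
      simp only [Finset.mem_Icc]
      omega
    · intro k hk
      simp only [Finset.mem_Icc] at hk
      show k - 2 + 2 = k
      omega
    · intro i _
      show i + 2 - 2 = i
      omega
    · intro k hk
      simp only [Finset.mem_Icc] at hk
      rw [show k - 2 + 2 = k from by omega, show (k - 2) * k = k * (k - 2) from by ring]
      rw [div_mul_eq_mul_div, div_mul_eq_mul_div]
      congr 1
      ring
  rw [hre, qCatalan, hmain]
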